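/- In a socially concave game, for a coarse correlated equilibrium π with mean ā, the CCE inequality together with convexity of u_i in opponents' actions implies E_π[u_i(a)] ≥ u_i(a'_i, ā_{-i}) for every player i and every a'_i ∈ A_i. -/

import Mathlib

open MeasureTheory

/-! Fix a unilateral deviation `a ↦ update a i a'ᵢ`. It maps the support of `π` into the fibre
`{b | b i = a'ᵢ}` of the action space, on which `u i` is convex, so Jensen's inequality bounds
`u i` at the mean of the deviated profile, `update ā i a'ᵢ`, by the expected payoff of the
deviation, which the CCE condition bounds by the expected payoff of `π`. -/

namespace MeasureTheory

theorem integral_update_const {X ι : Type*} [MeasurableSpace X] {μ : Measure X}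
    [IsProbabilityMeasure μ] [Fintype ι] [DecidableEq ι] {E : ι → Type*}
    [∀ i, NormedAddCommGroup (E i)] [∀ i, NormedSpace ℝ (E i)] [∀ i, CompleteSpace (E i)]
    {f : X → ∀ i, E i} (hf : Integrable f μ) (i : ι) (c : E i) :
    ∫ x, Function.update (f x) i c ∂μ = Function.update (∫ x, f x ∂μ) i c := by
  have hfi := hf.eval
  have hupd : ∀ j, Integrable (fun x ↦ Function.update (f x) i c j) μ := by
    intro j
    rcases eq_or_ne j i with rfl | hj
    · simp
    · simpa [Function.update_of_ne hj] using hfi j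
  funext j
  rw [eval_integral hupd]
  rcases eq_or_ne j i with rfl | hj
  · simp
  · simp [Function.update_of_ne hj, eval_integral hfi]

end MeasureTheory

theorem ContinuousOn.integrable_of_ae_mem_compact {X E : Type*} [MeasurableSpace X]
    [TopologicalSpace X] [OpensMeasurableSpace X] [T2Space X] [NormedAddCommGroup E]
    {μ : Measure X} [IsFiniteMeasureOnCompacts μ] {K : Set X} {f : X → E}
    (hf : ContinuousOn f K) (hK : IsCompact K) (hμK : ∀ᵐ x ∂μ, x ∈ K) :
    Integrable f μ := by
  simpa [IntegrableOn, Measure.restrict_eq_self_of_ae_mem hμK] using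
    hf.integrableOn_compact (μ := μ) hK

theorem stmt_7_general {ι : Type*} [Fintype ι] [DecidableEq ι]
    (d : ι → ℕ)
    (S : ∀ i, Set (EuclideanSpace ℝ (Fin (d i))))
    (hScomp : ∀ i, IsCompact (S i))
    (u : ι → (∀ i, EuclideanSpace ℝ (Fin (d i))) → ℝ)
    (hcont : ∀ i, Continuous (u i))
    (hconv : ∀ (i : ι) (ai : EuclideanSpace ℝ (Fin (d i))),
      ConvexOn ℝ {b | b ∈ Set.univ.pi S ∧ b i = ai} (u i))
    (π : Measure (∀ i, EuclideanSpace ℝ (Fin (d i))))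
    [IsProbabilityMeasure π]
    (hsupp : ∀ᵐ a ∂π, a ∈ Set.univ.pi S)
    (hCCE : ∀ (i : ι), ∀ ai' ∈ S i,
      (∫ a, u i (Function.update a i ai') ∂π) ≤ ∫ a, u i a ∂π)
    (abar : ∀ i, EuclideanSpace ℝ (Fin (d i)))
    (habar : abar = ∫ a, a ∂π) :
    ∀ (i : ι), ∀ ai' ∈ S i,
      u i (Function.update abar i ai') ≤ ∫ a, u i a ∂π := by
  intro i ai' hai'
  have hK : IsCompact (Set.univ.pi S) := isCompact_univ_pi hScomp
  have hdeviate : Continuous fun a : ∀ j, EuclideanSpace ℝ (Fin (d j)) ↦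
      Function.update a i ai' :=
    continuous_id.update i continuous_const
  have hfibre : IsClosed {b | b ∈ Set.univ.pi S ∧ b i = ai'} :=
    hK.isClosed.inter (isClosed_eq (continuous_apply i) continuous_const)
  have hdeviate_mem :
      ∀ᵐ a ∂π, Function.update a i ai' ∈ {b | b ∈ Set.univ.pi S ∧ b i = ai'} := by
    filter_upwards [hsupp] with a ha
    exact ⟨(Set.update_mem_pi_iff_of_mem ha).2 fun _ ↦ hai', Function.update_self i ai' a⟩
  calc u i (Function.update abar i ai') = u i (∫ a, Function.update a i ai' ∂π) := by
        rw [habar, integral_update_const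
          ((continuousOn_id' _).integrable_of_ae_mem_compact hK hsupp)]
    _ ≤ ∫ a, u i (Function.update a i ai') ∂π :=
        (hconv i ai').map_integral_le (hcont i).continuousOn hfibre hdeviate_mem
          (hdeviate.continuousOn.integrable_of_ae_mem_compact hK hsupp)
          (((hcont i).comp hdeviate).continuousOn.integrable_of_ae_mem_compact hK hsupp)
    _ ≤ ∫ a, u i a ∂π := hCCE i ai' hai'

/-- In a socially concave game, for a CCE π with mean ā, the CCE inequality
together with convexity of u_i in opponents' actions (Jensen) gives
E_π[u_i(a)] ≥ u_i(a'_i, ā_{-i}) for every player i and every a'_i ∈ S i. -/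
theorem stmt_7 {ι : Type*} [Fintype ι] [Nonempty ι] [DecidableEq ι]
    (d : ι → ℕ)
    (S : ∀ i, Set (EuclideanSpace ℝ (Fin (d i))))
    (hSne : ∀ i, (S i).Nonempty)
    (hSconv : ∀ i, Convex ℝ (S i)) (hScomp : ∀ i, IsCompact (S i))
    (u : ι → (∀ i, EuclideanSpace ℝ (Fin (d i))) → ℝ)
    (hcont : ∀ i, Continuous (u i))
    (hconv : ∀ (i : ι) (ai : EuclideanSpace ℝ (Fin (d i))),
      ConvexOn ℝ {b | b ∈ Set.univ.pi S ∧ b i = ai} (u i))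
    (π : Measure (∀ i, EuclideanSpace ℝ (Fin (d i))))
    [IsProbabilityMeasure π]
    (hsupp : ∀ᵐ a ∂π, a ∈ Set.univ.pi S)
    (hCCE : ∀ (i : ι), ∀ ai' ∈ S i,
      (∫ a, u i (Function.update a i ai') ∂π) ≤ ∫ a, u i a ∂π)
    (abar : ∀ i, EuclideanSpace ℝ (Fin (d i)))
    (habar : abar = ∫ a, a ∂π) :
    ∀ (i : ι), ∀ ai' ∈ S i,
      u i (Function.update abar i ai') ≤ ∫ a, u i a ∂π :=
  stmt_7_general d S hScomp u hcont hconv π hsupp hCCE abar habar
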